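/- Let G be a 3-regular (cubic) simple graph of order 10. Let t be the number of 4-subsets of V(G) whose induced subgraph is isomorphic to K4 minus one edge, and let s be the number of 4-subsets of V(G) whose induced subgraph is isomorphic to K4. Then d(G,6) = C(10,6) − (10 − t − 3s). -/

import Mathlib

/-- `S` is a dominating set of `G`: every vertex not in `S` is adjacent to some vertex of `S`. -/
def IsDomSet {V : Type*} (G : SimpleGraph V) (S : Finset V) : Prop :=
  ∀ v : V, v ∉ S → ∃ u ∈ S, G.Adj u v

/-- `d(G,i)`: the number of dominating sets of `G` of cardinality `i`. -/
noncomputable def domCount {V : Type*} (G : SimpleGraph V) (i : ℕ) : ℕ :=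
  {S : Finset V | IsDomSet G S ∧ S.card = i}.ncard

/-- `d_v(G,i)`: the number of dominating sets of `G` of cardinality `i` containing `v`. -/
noncomputable def domCountVert {V : Type*} (G : SimpleGraph V) (v : V) (i : ℕ) : ℕ :=
  {S : Finset V | IsDomSet G S ∧ S.card = i ∧ v ∈ S}.ncard

/-- The complete graph on four vertices minus one edge. -/
def K4MinusEdge : SimpleGraph (Fin 4) :=
  (⊤ : SimpleGraph (Fin 4)).deleteEdges {s(0, 1)}


/-!
A 6-set fails to dominate exactly when its complement contains a closed neighbourhood `N[v]`;
since `G` is cubic, `|N[v]| = 4 = 10 - 6`, so the complement then *is* `N[v]`. Hence the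
non-dominating 6-sets are counted by the distinct closed neighbourhoods. A 4-set `S` equals
`N[v]` iff `v` is a universal vertex of `G[S]`, so counting the pairs `(v, N[v])` gives
`10 = ∑_S u(S)`, where `u(S)` is the number of universal vertices of `G[S]`. On four vertices
`u ∈ {0, 1, 2, 4}` (three universal vertices make the fourth one universal), `u = 4` exactly for
`K4` and `u = 2` exactly for `K4` minus an edge. So there are `10 - t - 3s` distinct closed
neighbourhoods.
-/

open Finset SimpleGraph

namespace SimpleGraph

section universalVerts

variable {W W' : Type*} {H : SimpleGraph W} {H' : SimpleGraph W'}

theorem Iso.isUniversal_iff (e : H ≃g H') {v : W} : H'.IsUniversal (e v) ↔ H.IsUniversal v := by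
  simp only [IsUniversal, e.surjective.forall, e.injective.ne_iff, e.map_adj_iff]

theorem Iso.universalVerts_eq_image (e : H ≃g H') :
    H'.universalVerts = e '' H.universalVerts := by
  ext w
  obtain ⟨v, rfl⟩ := e.surjective w
  simp [universalVerts, e.isUniversal_iff]

theorem Iso.ncard_universalVerts (e : H ≃g H') :
    H'.universalVerts.ncard = H.universalVerts.ncard := by
  rw [e.universalVerts_eq_image, Set.ncard_image_of_injective _ e.injective]

@[simp]
theorem universalVerts_top : (⊤ : SimpleGraph W).universalVerts = Set.univ :=
  Set.eq_univ_of_forall fun _ _ h => h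

theorem eq_top_of_universalVerts_eq_univ (h : H.universalVerts = Set.univ) : H = ⊤ := by
  ext v w
  have hv : v ∈ H.universalVerts := h ▸ Set.mem_univ v
  exact ⟨H.ne_of_adj, fun hvw => hv hvw⟩

theorem ncard_universalVerts_add_one_ne [Finite W] :
    H.universalVerts.ncard + 1 ≠ Nat.card W := by
  intro h
  obtain ⟨x, hx⟩ : ∃ x, H.universalVertsᶜ = {x} := by
    rw [← Set.ncard_eq_one]
    have := Set.ncard_add_ncard_compl H.universalVerts
    omega
  have hxU : x ∉ H.universalVerts := by simp [← Set.mem_compl_iff, hx]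
  refine hxU fun w hxw => ?_
  have hw : w ∈ H.universalVerts := by
    by_contra hw
    have hw' : w ∈ H.universalVertsᶜ := hw
    rw [hx] at hw'
    exact hxw (Set.mem_singleton_iff.mp hw').symm
  exact (hw hxw.symm).symm

theorem nonempty_iso_top_iff_ncard_universalVerts_eq [Fintype W] {n : ℕ}
    (hW : Fintype.card W = n) :
    Nonempty (H ≃g (⊤ : SimpleGraph (Fin n))) ↔ H.universalVerts.ncard = n := by
  constructor
  · rintro ⟨e⟩
    rw [← e.ncard_universalVerts, universalVerts_top, Set.ncard_univ, Nat.card_fin]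
  · intro h
    have hU : H.universalVerts = Set.univ := Set.eq_of_subset_of_ncard_le (Set.subset_univ _)
      (by rw [Set.ncard_univ, Nat.card_eq_fintype_card, hW, h])
    rw [eq_top_of_universalVerts_eq_univ hU]
    exact ⟨Iso.completeGraph (Fintype.equivFinOfCardEq hW)⟩

def Iso.deleteEdges (e : H ≃g H') (s : Set (Sym2 W)) :
    H.deleteEdges s ≃g H'.deleteEdges (Sym2.map e '' s) where
  toEquiv := e.toEquiv
  map_rel_iff' {x y} := by
    change (H'.deleteEdges _).Adj (e x) (e y) ↔ _
    rw [deleteEdges_adj, deleteEdges_adj, e.map_adj_iff, ← Sym2.map_mk,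
      (Sym2.map.injective e.injective).mem_set_image]

theorem eq_top_deleteEdges_of_universalVerts_eq_compl {a b : W} (hab : a ≠ b)
    (h : H.universalVerts = {a, b}ᶜ) : H = (⊤ : SimpleGraph W).deleteEdges {s(a, b)} := by
  have hnab : ¬ H.Adj a b := by
    intro hadj
    have ha : a ∉ H.universalVerts := by simp [h]
    refine ha fun z haz => ?_
    by_cases hzb : z = b
    · exact hzb ▸ hadj
    · have hz : z ∈ H.universalVerts := by simp [h, Ne.symm haz, hzb]
      exact (hz haz.symm).symm
  ext x y
  simp only [deleteEdges_adj, top_adj, Set.mem_singleton_iff, Sym2.eq_iff]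
  constructor
  · rintro hxy
    refine ⟨H.ne_of_adj hxy, ?_⟩
    rintro (⟨rfl, rfl⟩ | ⟨rfl, rfl⟩)
    exacts [hnab hxy, hnab hxy.symm]
  · rintro ⟨hxy, hs⟩
    by_cases hx : x ∈ H.universalVerts
    · exact hx hxy
    by_cases hy : y ∈ H.universalVerts
    · exact (hy (Ne.symm hxy)).symm
    simp only [h, Set.mem_compl_iff, Set.mem_insert_iff, Set.mem_singleton_iff, not_not] at hx hy
    rcases hx with rfl | rfl <;> rcases hy with rfl | rfl <;> simp_all

theorem ncard_universalVerts_mem_of_card_eq_four [Fintype W] (hW : Fintype.card W = 4) :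
    H.universalVerts.ncard ∈ ({0, 1, 2, 4} : Finset ℕ) := by
  have hcard : Nat.card W = 4 := by rw [Nat.card_eq_fintype_card, hW]
  have hle := hcard ▸ Set.ncard_le_card H.universalVerts
  have hne := hcard ▸ ncard_universalVerts_add_one_ne (H := H)
  simp only [mem_insert, mem_singleton]
  omega

theorem universalVerts_K4MinusEdge : K4MinusEdge.universalVerts = {2, 3} := by
  ext v
  fin_cases v <;> simp [universalVerts, IsUniversal, K4MinusEdge, Fin.forall_fin_succ]

theorem nonempty_iso_K4MinusEdge_iff_ncard_universalVerts_eq_two [Fintype W]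
    (hW : Fintype.card W = 4) :
    Nonempty (H ≃g K4MinusEdge) ↔ H.universalVerts.ncard = 2 := by
  constructor
  · rintro ⟨e⟩
    rw [← e.ncard_universalVerts, universalVerts_K4MinusEdge, Set.ncard_pair (by decide)]
  · intro h
    have hcompl : H.universalVertsᶜ.ncard = 2 := by
      have := Set.ncard_add_ncard_compl H.universalVerts
      rw [Nat.card_eq_fintype_card, hW] at this
      omega
    obtain ⟨u, w, huw, hU⟩ := Set.ncard_eq_two.mp h
    obtain ⟨a, b, hab, hC⟩ := Set.ncard_eq_two.mp hcompl
    have hUab : H.universalVerts = {a, b}ᶜ := by rw [← hC, compl_compl]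
    have hfresh : a ∉ ({u, w} : Set W) ∧ b ∉ ({u, w} : Set W) := by
      simp [← hU, hUab]
    simp only [Set.mem_insert_iff, Set.mem_singleton_iff, not_or] at hfresh
    have hinj : Function.Injective ![a, b, u, w] := by
      intro i j hij
      fin_cases i <;> fin_cases j <;> simp_all [eq_comm]
    let e : Fin 4 ≃ W := Equiv.ofBijective _
      ((Fintype.bijective_iff_injective_and_card _).mpr ⟨hinj, by simp [hW]⟩)
    have hK : K4MinusEdge ≃g (⊤ : SimpleGraph W).deleteEdges {s(a, b)} := by
      convert (Iso.completeGraph e).deleteEdges {s(0, 1)}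
      · rfl
      · simp [Iso.completeGraph, e]
    rw [eq_top_deleteEdges_of_universalVerts_eq_compl hab hUab]
    exact ⟨hK.symm⟩

end universalVerts

section closedNeighborFinset

variable {V : Type*} [Fintype V] [DecidableEq V] (G : SimpleGraph V) [DecidableRel G.Adj]

def closedNeighborFinset (v : V) : Finset V := insert v (G.neighborFinset v)

variable {G} {k : ℕ}

theorem mem_closedNeighborFinset {v w : V} :
    w ∈ G.closedNeighborFinset v ↔ w = v ∨ G.Adj v w := by
  simp [closedNeighborFinset]

theorem card_closedNeighborFinset (hreg : G.IsRegularOfDegree k) (v : V) :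
    #(G.closedNeighborFinset v) = k + 1 := by
  rw [closedNeighborFinset, card_insert_of_notMem (G.notMem_neighborFinset_self v),
    card_neighborFinset_eq_degree, hreg v]

theorem closedNeighborFinset_eq_iff (hreg : G.IsRegularOfDegree k) {S : Finset V}
    (hS : #S = k + 1) {v : V} :
    G.closedNeighborFinset v = S ↔
      v ∈ Subtype.val '' (G.induce (S : Set V)).universalVerts := by
  constructor
  · rintro rfl
    refine ⟨⟨v, by simp [closedNeighborFinset]⟩, fun ⟨w, hw⟩ hvw => ?_, rfl⟩
    exact (mem_closedNeighborFinset.mp hw).resolve_left fun h => hvw (Subtype.ext h.symm)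
  · rintro ⟨⟨v, hv⟩, hU, rfl⟩
    refine (eq_of_subset_of_card_le (fun w hw => ?_) ?_).symm
    · rw [mem_closedNeighborFinset, or_iff_not_imp_left]
      exact fun hwv => hU (w := ⟨w, hw⟩) (by simpa [Subtype.ext_iff, eq_comm] using hwv)
    · rw [hS, card_closedNeighborFinset hreg]

theorem card_filter_closedNeighborFinset_eq (hreg : G.IsRegularOfDegree k) {S : Finset V}
    (hS : #S = k + 1) :
    #{v | G.closedNeighborFinset v = S} = (G.induce (S : Set V)).universalVerts.ncard := by
  rw [← Set.ncard_coe_finset, ← Set.ncard_image_of_injective _ Subtype.val_injective]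
  congr 1
  ext v
  simp [closedNeighborFinset_eq_iff hreg hS]

theorem sum_ncard_universalVerts_induce (hreg : G.IsRegularOfDegree k) :
    ∑ S ∈ powersetCard (k + 1) (univ : Finset V), (G.induce (S : Set V)).universalVerts.ncard =
      Fintype.card V := by
  rw [← card_univ, card_eq_sum_card_fiberwise (f := G.closedNeighborFinset)
    fun v _ => mem_powersetCard_univ.mpr (card_closedNeighborFinset hreg v)]
  exact sum_congr rfl fun S hS =>
    (card_filter_closedNeighborFinset_eq hreg (mem_powersetCard_univ.mp hS)).symm

theorem image_closedNeighborFinset (hreg : G.IsRegularOfDegree k) :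
    univ.image G.closedNeighborFinset =
      {S ∈ powersetCard (k + 1) (univ : Finset V) |
        (G.induce ((S : Finset V) : Set V)).universalVerts.ncard ≠ 0} := by
  ext S
  simp only [mem_image, mem_univ, true_and, mem_filter, mem_powersetCard_univ]
  constructor
  · rintro ⟨v, rfl⟩
    have hS := card_closedNeighborFinset hreg v
    obtain ⟨x, hx, -⟩ := (closedNeighborFinset_eq_iff hreg hS).mp rfl
    exact ⟨hS, Set.ncard_ne_zero_of_mem hx⟩
  · rintro ⟨hS, hU⟩
    obtain ⟨x, hx⟩ := Set.nonempty_of_ncard_ne_zero hU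
    exact ⟨x, (closedNeighborFinset_eq_iff hreg hS).mpr ⟨x, hx, rfl⟩⟩

end closedNeighborFinset

end SimpleGraph

theorem Finset.sum_eq_card_filters_of_forall_mem_zero_one_two_four {ι : Type*} (s : Finset ι)
    (f : ι → ℕ)
    (hf : ∀ i ∈ s, f i ∈ ({0, 1, 2, 4} : Finset ℕ)) :
    ∑ i ∈ s, f i =
      #{i ∈ s | f i ≠ 0} + #{i ∈ s | f i = 2} + 3 * #{i ∈ s | f i = 4} := by
  simp only [card_filter, mul_sum, ← sum_add_distrib]
  refine sum_congr rfl fun i hi => ?_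
  have := hf i hi
  simp only [mem_insert, mem_singleton] at this
  rcases this with h | h | h | h <;> simp [h]

section domination

variable {V : Type*} [Fintype V] [DecidableEq V] {G : SimpleGraph V} [DecidableRel G.Adj]
  {k : ℕ}

instance : DecidablePred (IsDomSet G) := fun S =>
  inferInstanceAs (Decidable (∀ v, v ∉ S → ∃ u ∈ S, G.Adj u v))

theorem not_isDomSet_iff {S : Finset V} :
    ¬ IsDomSet G S ↔ ∃ v, G.closedNeighborFinset v ⊆ Sᶜ := by
  simp only [IsDomSet, not_forall, not_exists, not_and, exists_prop, subset_iff,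
    mem_closedNeighborFinset, mem_compl]
  refine exists_congr fun v =>
    ⟨fun ⟨hv, hS⟩ w => ?_, fun h => ⟨h (.inl rfl), fun u hu huv => ?_⟩⟩
  · rintro (rfl | hvw)
    exacts [hv, fun hw => hS w hw hvw.symm]
  · exact h (.inr huv.symm) hu

theorem ncard_setOf_card_eq_and {α : Type*} [Fintype α] [DecidableEq α] (n : ℕ)
    (p : Finset α → Prop) [DecidablePred p] :
    {S : Finset α | #S = n ∧ p S}.ncard = #{S ∈ powersetCard n univ | p S} := by
  rw [← Set.ncard_coe_finset]
  congr 1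
  ext S
  simp

theorem domCount_eq_card_filter (i : ℕ) :
    domCount G i = #{S ∈ powersetCard i univ | IsDomSet G S} := by
  rw [domCount, ← ncard_setOf_card_eq_and]
  simp_rw [and_comm]

theorem domCount_add_card_filter_not_isDomSet (i : ℕ) :
    domCount G i + #{S ∈ powersetCard i univ | ¬ IsDomSet G S} = (Fintype.card V).choose i := by
  rw [domCount_eq_card_filter, card_filter_add_card_filter_not, card_powersetCard, card_univ]

theorem card_filter_not_isDomSet (hreg : G.IsRegularOfDegree k) {m : ℕ}
    (hm : m + (k + 1) = Fintype.card V) :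
    #{S ∈ powersetCard m univ | ¬ IsDomSet G S} = #(univ.image G.closedNeighborFinset) := by
  refine card_nbij' compl compl (fun S hS => ?_) (fun T hT => ?_)
    (fun S _ => compl_compl S) (fun T _ => compl_compl T)
  · obtain ⟨hSm, hnd⟩ : #S = m ∧ ¬ IsDomSet G S := by simpa using hS
    obtain ⟨v, hv⟩ := not_isDomSet_iff.mp hnd
    refine mem_image.mpr ⟨v, mem_univ v, eq_of_subset_of_card_le hv ?_⟩
    rw [card_compl, card_closedNeighborFinset hreg]
    omega
  · obtain ⟨v, -, rfl⟩ := mem_image.mp hT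
    have hcard := card_closedNeighborFinset hreg v
    simp only [coe_filter, mem_powersetCard_univ, Set.mem_ofPred_eq, card_compl]
    exact ⟨by omega, not_isDomSet_iff.mpr ⟨v, by rw [compl_compl]⟩⟩

end domination

theorem cubic_order_ten_domCount_six_general {V : Type*} [Fintype V]
    (G : SimpleGraph V) [DecidableRel G.Adj]
    (hreg : G.IsRegularOfDegree 3) (hcard : Fintype.card V = 10)
    (t s : ℕ)
    (ht : t = {S : Finset V | S.card = 4 ∧
      Nonempty (G.induce (S : Set V) ≃g K4MinusEdge)}.ncard)
    (hs : s = {S : Finset V | S.card = 4 ∧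
      Nonempty (G.induce (S : Set V) ≃g (⊤ : SimpleGraph (Fin 4)))}.ncard) :
    domCount G 6 = Nat.choose 10 6 - (10 - t - 3 * s) := by
  classical
  let c : Finset V → ℕ := fun S => (G.induce (S : Set V)).universalVerts.ncard
  have hfour : ∀ S ∈ powersetCard 4 (univ : Finset V), Fintype.card (S : Set V) = 4 :=
    fun S hS => by simpa using mem_powersetCard_univ.mp hS
  have ht' : t = #{S ∈ powersetCard 4 univ | c S = 2} := by
    rw [ht, ncard_setOf_card_eq_and]
    exact congrArg card (filter_congr fun S hS =>
      nonempty_iso_K4MinusEdge_iff_ncard_universalVerts_eq_two (hfour S hS))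
  have hs' : s = #{S ∈ powersetCard 4 univ | c S = 4} := by
    rw [hs, ncard_setOf_card_eq_and]
    exact congrArg card (filter_congr fun S hS =>
      nonempty_iso_top_iff_ncard_universalVerts_eq (hfour S hS))
  have hcount : 10 = #{S ∈ powersetCard 4 univ | c S ≠ 0} + t + 3 * s := by
    rw [← hcard, ← sum_ncard_universalVerts_induce hreg, ht', hs']
    exact sum_eq_card_filters_of_forall_mem_zero_one_two_four _ c
      fun S hS => ncard_universalVerts_mem_of_card_eq_four (hfour S hS)
  have hnondom := card_filter_not_isDomSet hreg (m := 6) (by omega)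
  rw [image_closedNeighborFinset hreg] at hnondom
  change _ = #{S ∈ powersetCard 4 univ | c S ≠ 0} at hnondom
  have hsplit := domCount_add_card_filter_not_isDomSet (G := G) 6
  rw [hcard] at hsplit
  omega

theorem cubic_order_ten_domCount_six {V : Type*} [Fintype V] [DecidableEq V]
    (G : SimpleGraph V) [DecidableRel G.Adj]
    (hreg : G.IsRegularOfDegree 3) (hcard : Fintype.card V = 10)
    (t s : ℕ)
    (ht : t = {S : Finset V | S.card = 4 ∧
      Nonempty (G.induce (S : Set V) ≃g K4MinusEdge)}.ncard)
    (hs : s = {S : Finset V | S.card = 4 ∧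
      Nonempty (G.induce (S : Set V) ≃g (⊤ : SimpleGraph (Fin 4)))}.ncard) :
    domCount G 6 = Nat.choose 10 6 - (10 - t - 3 * s) :=
  cubic_order_ten_domCount_six_general G hreg hcard t s ht hs
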